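/- Let X be a real normed space, Y a real Banach space, and ψ : X × X → [0, ∞) a function such that the series ∑_{i=0}^∞ ψ(0, 2^i x)/16^i converges for all x in X and lim_{n→∞} ψ(2^n x, 2^n y)/16^n = 0 for all x, y in X. If f : X → Y is an even function with f(0) = 0 satisfying ‖D_f(x,y)‖ ≤ ψ(x,y) for all x, y in X, then there exists a unique quartic function Q : X → Y such that ‖f(x) - Q(x)‖ ≤ (1/48) ∑_{i=0}^∞ ψ(0, 2^i x)/16^i for all x in X; moreover Q(x) = lim_{n→∞} f(2^n x)/16^n. -/

import Mathlib

open Filter Topology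

/-- The quartic functional equation:
`Q(2x+y) + Q(2x-y) = 4(Q(x+y) + Q(x-y)) + 24 Q(x) - 6 Q(y)`. -/
def IsQuartic {X Y : Type*} [AddCommGroup X] [Module ℝ X] [AddCommGroup Y] [Module ℝ Y]
    (f : X → Y) : Prop :=
  ∀ x y : X,
    f ((2 : ℝ) • x + y) + f ((2 : ℝ) • x - y) =
      (4 : ℝ) • (f (x + y) + f (x - y)) + (24 : ℝ) • f x - (6 : ℝ) • f y

/-- The difference operator
`D_f(x,y) = 7[f(2x+y) + f(2x-y)] - 28[f(x+y) + f(x-y)] + 3[f(2y) - 2f(y)] - 14[f(2x) - 4f(x)]`. -/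
def Dmap {X Y : Type*} [AddCommGroup X] [Module ℝ X] [AddCommGroup Y] [Module ℝ Y]
    (f : X → Y) (x y : X) : Y :=
  (7 : ℝ) • (f ((2 : ℝ) • x + y) + f ((2 : ℝ) • x - y))
    - (28 : ℝ) • (f (x + y) + f (x - y))
    + (3 : ℝ) • (f ((2 : ℝ) • y) - (2 : ℝ) • f y)
    - (14 : ℝ) • (f ((2 : ℝ) • x) - (4 : ℝ) • f x)

/-!
Putting `x = 0` in `D_f` for an even `f` with `f 0 = 0` leaves `D_f(0, x) = 3 (f(2x) - 16 f(x))`,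
so `f` is almost homogeneous of degree 4 under doubling. The direct (Hyers) method then applies:
`16⁻ⁿ f(2ⁿ x)` is Cauchy with increments bounded by the terms of the given series, its limit `Q`
satisfies `D_Q = 0` because `16⁻ⁿ D_f(2ⁿ x, 2ⁿ y) → 0`, and `D_Q = 0` together with
`Q(2x) = 16 Q(x)` (from `D_Q(0, x) = 0`) is `7` times the quartic equation. Uniqueness holds
because two quartic functions at bounded distance from `f` satisfy
`Q(x) - Q'(x) = 16⁻ⁿ (Q - Q')(2ⁿ x)`, which is bounded by a tail of the convergent series.
-/

section Dmap

variable {X Y : Type*} [AddCommGroup X] [Module ℝ X] [AddCommGroup Y] [Module ℝ Y]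

lemma two_pow_succ_smul (n : ℕ) (x : X) : (2 : ℝ) ^ (n + 1) • x = (2 : ℝ) • (2 : ℝ) ^ n • x := by
  rw [smul_smul, ← pow_succ']

lemma Dmap_zero_left {f : X → Y} (heven : ∀ x, f (-x) = f x) (hf0 : f 0 = 0) (x : X) :
    Dmap f 0 x = (3 : ℝ) • (f ((2 : ℝ) • x) - (16 : ℝ) • f x) := by
  simp only [Dmap, smul_zero, zero_add, zero_sub, heven, hf0, sub_zero]
  module

lemma Dmap_comp_smul (f : X → Y) (c a : ℝ) (x y : X) :
    Dmap (fun z => c • f (a • z)) x y = c • Dmap f (a • x) (a • y) := by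
  simp only [Dmap, smul_add, smul_sub, smul_comm a (2 : ℝ)]
  module

lemma tendsto_Dmap [TopologicalSpace Y] [IsTopologicalAddGroup Y] [ContinuousConstSMul ℝ Y]
    {ι : Type*} {l : Filter ι} {g : ι → X → Y} {Q : X → Y}
    (hg : ∀ z, Tendsto (fun i => g i z) l (𝓝 (Q z))) (x y : X) :
    Tendsto (fun i => Dmap (g i) x y) l (𝓝 (Dmap Q x y)) :=
  ((((hg _).add (hg _)).const_smul _).sub (((hg _).add (hg _)).const_smul _)).add
    (((hg _).sub ((hg _).const_smul _)).const_smul _) |>.sub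
    (((hg _).sub ((hg _).const_smul _)).const_smul _)

namespace IsQuartic

variable {Q : X → Y}

lemma map_zero (hQ : IsQuartic Q) : Q 0 = 0 := by
  have h := hQ 0 0
  simp only [smul_zero, add_zero, sub_zero] at h
  have h24 : (24 : ℝ) • Q 0 = 0 := by linear_combination (norm := module) -h
  exact (smul_eq_zero.mp h24).resolve_left (by norm_num)

lemma map_two_smul (hQ : IsQuartic Q) (x : X) : Q ((2 : ℝ) • x) = (16 : ℝ) • Q x := by
  have h := hQ x 0
  simp only [hQ.map_zero, add_zero, sub_zero, smul_zero] at h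
  have h2 : (2 : ℝ) • Q ((2 : ℝ) • x) = (2 : ℝ) • (16 : ℝ) • Q x := by
    linear_combination (norm := module) h
  exact smul_right_injective Y two_ne_zero h2

lemma map_two_pow_smul (hQ : IsQuartic Q) (n : ℕ) (x : X) :
    Q ((2 : ℝ) ^ n • x) = (16 : ℝ) ^ n • Q x := by
  induction n with
  | zero => simp
  | succ n ih => rw [two_pow_succ_smul, hQ.map_two_smul, ih, smul_smul, ← pow_succ']

end IsQuartic

lemma isQuartic_of_Dmap_eq_zero {Q : X → Y} (heven : ∀ x, Q (-x) = Q x) (hQ0 : Q 0 = 0)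
    (hD : ∀ x y, Dmap Q x y = 0) : IsQuartic Q := by
  have hdouble (x : X) : Q ((2 : ℝ) • x) = (16 : ℝ) • Q x := by
    have h3 := Dmap_zero_left heven hQ0 x ▸ hD 0 x
    exact sub_eq_zero.mp ((smul_eq_zero.mp h3).resolve_left (by norm_num))
  intro x y
  have h := hD x y
  rw [Dmap, hdouble x, hdouble y] at h
  have h7 : (7 : ℝ) • (Q ((2 : ℝ) • x + y) + Q ((2 : ℝ) • x - y))
      = (7 : ℝ) • ((4 : ℝ) • (Q (x + y) + Q (x - y)) + (24 : ℝ) • Q x - (6 : ℝ) • Q y) := by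
    linear_combination (norm := module) h
  exact smul_right_injective Y (by norm_num) h7

end Dmap

section DirectMethod

variable {X Y : Type*} [AddCommGroup X] [Module ℝ X] [NormedAddCommGroup Y] [NormedSpace ℝ Y]

noncomputable def quarticApprox (f : X → Y) (n : ℕ) (x : X) : Y :=
  ((16 : ℝ) ^ n)⁻¹ • f ((2 : ℝ) ^ n • x)

lemma tendsto_Dmap_quarticApprox_zero {f : X → Y} {ψ : X → X → ℝ}
    (hD : ∀ x y, ‖Dmap f x y‖ ≤ ψ x y) {x y : X}
    (hlim : Tendsto (fun n : ℕ => ψ ((2 : ℝ) ^ n • x) ((2 : ℝ) ^ n • y) / 16 ^ n) atTop (𝓝 0)) :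
    Tendsto (fun n => Dmap (quarticApprox f n) x y) atTop (𝓝 0) := by
  refine squeeze_zero_norm (fun n => ?_) hlim
  unfold quarticApprox
  rw [Dmap_comp_smul, norm_smul, norm_inv, norm_pow, Real.norm_ofNat, div_eq_inv_mul]
  exact mul_le_mul_of_nonneg_left (hD _ _) (by positivity)

variable {f : X → Y} {φ : X → ℝ}

lemma dist_quarticApprox_succ_le (hφ : ∀ x, ‖f ((2 : ℝ) • x) - (16 : ℝ) • f x‖ ≤ φ x)
    (x : X) (n : ℕ) :
    dist (quarticApprox f n x) (quarticApprox f (n + 1) x) ≤ φ ((2 : ℝ) ^ n • x) / 16 ^ n / 16 := by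
  have hsplit : quarticApprox f n x - quarticApprox f (n + 1) x = -((16 : ℝ) ^ (n + 1))⁻¹ •
      (f ((2 : ℝ) • (2 : ℝ) ^ n • x) - (16 : ℝ) • f ((2 : ℝ) ^ n • x)) := by
    rw [quarticApprox, quarticApprox, two_pow_succ_smul, pow_succ, smul_sub, smul_smul]
    field_simp
    module
  rw [dist_eq_norm, hsplit, norm_smul, norm_neg, norm_inv, norm_pow, Real.norm_ofNat, pow_succ,
    div_div, div_eq_inv_mul]
  exact mul_le_mul_of_nonneg_left (hφ _) (by positivity)

lemma exists_tendsto_quarticApprox [CompleteSpace Y]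
    (hφ : ∀ x, ‖f ((2 : ℝ) • x) - (16 : ℝ) • f x‖ ≤ φ x) (x : X)
    (hsum : Summable fun i : ℕ => φ ((2 : ℝ) ^ i • x) / 16 ^ i) :
    ∃ L, Tendsto (fun n => quarticApprox f n x) atTop (𝓝 L) ∧
      ‖f x - L‖ ≤ (1 / 16) * ∑' i : ℕ, φ ((2 : ℝ) ^ i • x) / 16 ^ i := by
  have hsum' := hsum.div_const 16
  obtain ⟨L, hL⟩ := cauchySeq_tendsto_of_complete
    (cauchySeq_of_dist_le_of_summable _ (dist_quarticApprox_succ_le hφ x) hsum')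
  refine ⟨L, hL, ?_⟩
  have h := dist_le_tsum_of_dist_le_of_tendsto₀ _ (dist_quarticApprox_succ_le hφ x) hsum' hL
  rw [tsum_div_const, dist_eq_norm] at h
  simpa [quarticApprox, div_eq_inv_mul] using h

end DirectMethod

lemma tendsto_tsum_two_pow_smul_div {X : Type*} [AddCommGroup X] [Module ℝ X] (φ : X → ℝ) (x : X) :
    Tendsto (fun n : ℕ => (∑' i : ℕ, φ ((2 : ℝ) ^ i • (2 : ℝ) ^ n • x) / 16 ^ i) / 16 ^ n)
      atTop (𝓝 0) := by
  refine (tendsto_sum_nat_add fun i => φ ((2 : ℝ) ^ i • x) / 16 ^ i).congr fun n => ?_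
  rw [← tsum_div_const]
  refine tsum_congr fun i => ?_
  rw [smul_smul, ← pow_add, pow_add (16 : ℝ), div_div]

lemma IsQuartic.eq_of_norm_sub_le {X Y : Type*} [AddCommGroup X] [Module ℝ X]
    [NormedAddCommGroup Y] [NormedSpace ℝ Y] {Q Q' : X → Y} (hQ : IsQuartic Q)
    (hQ' : IsQuartic Q') {B : X → ℝ} (hB : ∀ x, ‖Q x - Q' x‖ ≤ B x)
    (hBlim : ∀ x, Tendsto (fun n : ℕ => B ((2 : ℝ) ^ n • x) / 16 ^ n) atTop (𝓝 0)) : Q = Q' := by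
  funext x
  have hscaled (n : ℕ) : ‖Q x - Q' x‖ ≤ B ((2 : ℝ) ^ n • x) / 16 ^ n := by
    have h := hB ((2 : ℝ) ^ n • x)
    rw [hQ.map_two_pow_smul, hQ'.map_two_pow_smul, ← smul_sub, norm_smul, norm_pow,
      Real.norm_ofNat] at h
    rwa [le_div_iff₀' (by positivity)]
  exact sub_eq_zero.mp (norm_le_zero_iff.mp (ge_of_tendsto' (hBlim x) hscaled))

theorem even_stability_general {X Y : Type*} [NormedAddCommGroup X] [NormedSpace ℝ X]
    [NormedAddCommGroup Y] [NormedSpace ℝ Y] [CompleteSpace Y]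
    (ψ : X → X → ℝ)
    (hsum : ∀ x : X, Summable fun i : ℕ => ψ 0 ((2 : ℝ) ^ i • x) / 16 ^ i)
    (hlim : ∀ x y : X,
      Tendsto (fun n : ℕ => ψ ((2 : ℝ) ^ n • x) ((2 : ℝ) ^ n • y) / 16 ^ n) atTop (𝓝 0))
    (f : X → Y) (heven : ∀ x : X, f (-x) = f x) (hf0 : f 0 = 0)
    (hD : ∀ x y : X, ‖Dmap f x y‖ ≤ ψ x y) :
    ∃ Q : X → Y, IsQuartic Q ∧
      (∀ x : X, ‖f x - Q x‖ ≤ (1 / 48) * ∑' i : ℕ, ψ 0 ((2 : ℝ) ^ i • x) / 16 ^ i) ∧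
      (∀ x : X,
        Tendsto (fun n : ℕ => ((16 : ℝ) ^ n)⁻¹ • f ((2 : ℝ) ^ n • x)) atTop (𝓝 (Q x))) ∧
      ∀ Q' : X → Y, IsQuartic Q' →
        (∀ x : X, ‖f x - Q' x‖ ≤ (1 / 48) * ∑' i : ℕ, ψ 0 ((2 : ℝ) ^ i • x) / 16 ^ i) →
        Q' = Q := by
  have hφ (x : X) : ‖f ((2 : ℝ) • x) - (16 : ℝ) • f x‖ ≤ ψ 0 x / 3 := by
    have h := hD 0 x
    rw [Dmap_zero_left heven hf0, norm_smul, Real.norm_ofNat] at h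
    linarith
  have hsum' (x : X) : Summable fun i : ℕ => ψ 0 ((2 : ℝ) ^ i • x) / 3 / 16 ^ i := by
    simpa only [div_right_comm] using (hsum x).div_const 3
  choose Q hQ hfQ using fun x => exists_tendsto_quarticApprox hφ x (hsum' x)
  have hbound (x : X) : ‖f x - Q x‖ ≤ (1 / 48) * ∑' i : ℕ, ψ 0 ((2 : ℝ) ^ i • x) / 16 ^ i := by
    have h := hfQ x
    simp only [div_right_comm _ (3 : ℝ), tsum_div_const] at h
    linarith
  have hQ0 : Q 0 = 0 :=
    tendsto_nhds_unique (hQ 0) (by simp [quarticApprox, hf0])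
  have hQeven (x : X) : Q (-x) = Q x :=
    tendsto_nhds_unique (by simpa only [quarticApprox, smul_neg, heven] using hQ (-x)) (hQ x)
  have hquartic : IsQuartic Q := isQuartic_of_Dmap_eq_zero hQeven hQ0 fun x y =>
    tendsto_nhds_unique (tendsto_Dmap hQ x y) (tendsto_Dmap_quarticApprox_zero hD (hlim x y))
  refine ⟨Q, hquartic, hbound, hQ, fun Q' hQ' hbound' => ?_⟩
  refine hQ'.eq_of_norm_sub_le hquartic
    (B := fun x => (1 / 24) * ∑' i : ℕ, ψ 0 ((2 : ℝ) ^ i • x) / 16 ^ i) (fun x => ?_) (fun x => ?_)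
  · linarith [hbound x, hbound' x, norm_sub_le_norm_sub_add_norm_sub (Q' x) (f x) (Q x),
      norm_sub_rev (Q' x) (f x)]
  · simpa [mul_div_assoc] using
      (tendsto_tsum_two_pow_smul_div (ψ 0) x).const_mul (1 / 24 : ℝ)

theorem even_stability {X Y : Type*} [NormedAddCommGroup X] [NormedSpace ℝ X]
    [NormedAddCommGroup Y] [NormedSpace ℝ Y] [CompleteSpace Y]
    (ψ : X → X → ℝ) (hψ : ∀ x y : X, 0 ≤ ψ x y)
    (hsum : ∀ x : X, Summable fun i : ℕ => ψ 0 ((2 : ℝ) ^ i • x) / 16 ^ i)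
    (hlim : ∀ x y : X,
      Tendsto (fun n : ℕ => ψ ((2 : ℝ) ^ n • x) ((2 : ℝ) ^ n • y) / 16 ^ n) atTop (𝓝 0))
    (f : X → Y) (heven : ∀ x : X, f (-x) = f x) (hf0 : f 0 = 0)
    (hD : ∀ x y : X, ‖Dmap f x y‖ ≤ ψ x y) :
    ∃ Q : X → Y, IsQuartic Q ∧
      (∀ x : X, ‖f x - Q x‖ ≤ (1 / 48) * ∑' i : ℕ, ψ 0 ((2 : ℝ) ^ i • x) / 16 ^ i) ∧
      (∀ x : X,
        Tendsto (fun n : ℕ => ((16 : ℝ) ^ n)⁻¹ • f ((2 : ℝ) ^ n • x)) atTop (𝓝 (Q x))) ∧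
      ∀ Q' : X → Y, IsQuartic Q' →
        (∀ x : X, ‖f x - Q' x‖ ≤ (1 / 48) * ∑' i : ℕ, ψ 0 ((2 : ℝ) ^ i • x) / 16 ^ i) →
        Q' = Q :=
  even_stability_general ψ hsum hlim f heven hf0 hD
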